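/- Let L_T be twice continuously differentiable with ∂L_T/∂θ(ψ, θ*(ψ)) = 0 and invertible Hessian H = ∂²L_T/∂θ∂θᵀ at (ψ, θ*(ψ)), and let L_V be continuously differentiable. If g₁ = ∂L_V/∂ψ, g₂ = ∂L_V/∂θ, P = ∂²L_T/∂θ∂ψᵀ, and v solves v·H = g₂, then the total derivative of ψ ↦ L_V(ψ, θ*(ψ)) equals g₁ − v·P. -/

import Mathlib

/-!
Differentiating the stationarity condition `∂L_T/∂θ (ψ, θ*(ψ)) = 0` along `ψ` gives
`P + H · Dθ* = 0`, while the chain rule gives the total derivative `g₁ + g₂ · Dθ*`.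
Since `g₂ = v · H`, the correction term is `g₂ · Dθ* = v · H · Dθ* = - v · P`.
-/

open Matrix

/-- The `i`-th partial derivative of a loss in the second (adapted) argument. -/
noncomputable def gradθ {m n : ℕ} (L : (Fin m → ℝ) × (Fin n → ℝ) → ℝ)
    (ψ : Fin m → ℝ) (θ : Fin n → ℝ) (i : Fin n) : ℝ :=
  fderiv ℝ (fun θ' => L (ψ, θ')) θ (Pi.single i 1)

/-- Hessian `∂²L/∂θ∂θᵀ` evaluated at `(ψ, θ)`. -/
noncomputable def hessθθ {m n : ℕ} (L : (Fin m → ℝ) × (Fin n → ℝ) → ℝ)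
    (ψ : Fin m → ℝ) (θ : Fin n → ℝ) : Matrix (Fin n) (Fin n) ℝ :=
  fun i j => fderiv ℝ (fun θ' => gradθ L ψ θ' i) θ (Pi.single j 1)

/-- Mixed second derivatives `∂²L/∂θ∂ψᵀ` evaluated at `(ψ, θ)`. -/
noncomputable def hessθψ {m n : ℕ} (L : (Fin m → ℝ) × (Fin n → ℝ) → ℝ)
    (ψ : Fin m → ℝ) (θ : Fin n → ℝ) : Matrix (Fin n) (Fin m) ℝ :=
  fun i j => fderiv ℝ (fun ψ' => gradθ L ψ' θ i) ψ (Pi.single j 1)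

open ContinuousLinearMap Filter Topology

section PartialDerivatives

variable {𝕜 E F G : Type*} [NontriviallyNormedField 𝕜] [NormedAddCommGroup E] [NormedSpace 𝕜 E]
  [NormedAddCommGroup F] [NormedSpace 𝕜 F] [NormedAddCommGroup G] [NormedSpace 𝕜 G]
  {f : E × F → G} {x : E}

theorem fderiv_comp_prodMk_left {y : F} (hf : DifferentiableAt 𝕜 f (x, y)) :
    fderiv 𝕜 (fun x' => f (x', y)) x = fderiv 𝕜 f (x, y) ∘L inl 𝕜 E F :=
  (hf.hasFDerivAt.comp x (hasFDerivAt_prodMk_left x y)).fderiv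

theorem fderiv_comp_prodMk_right {y : F} (hf : DifferentiableAt 𝕜 f (x, y)) :
    fderiv 𝕜 (fun y' => f (x, y')) y = fderiv 𝕜 f (x, y) ∘L inr 𝕜 E F :=
  (hf.hasFDerivAt.comp y (hasFDerivAt_prodMk_right x y)).fderiv

variable {θ : E → F}

theorem fderiv_comp_graph (hf : DifferentiableAt 𝕜 f (x, θ x)) (hθ : DifferentiableAt 𝕜 θ x) :
    fderiv 𝕜 (fun x' => f (x', θ x')) x =
      fderiv 𝕜 f (x, θ x) ∘L inl 𝕜 E F + fderiv 𝕜 f (x, θ x) ∘L inr 𝕜 E F ∘L fderiv 𝕜 θ x := by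
  have hgraph : HasFDerivAt (fun x' => (x', θ x'))
      ((ContinuousLinearMap.id 𝕜 E).prod (fderiv 𝕜 θ x)) x :=
    (hasFDerivAt_id x).prodMk hθ.hasFDerivAt
  have hcomp : HasFDerivAt (fun x' => f (x', θ x'))
      (fderiv 𝕜 f (x, θ x) ∘L (ContinuousLinearMap.id 𝕜 E).prod (fderiv 𝕜 θ x)) x :=
    hf.hasFDerivAt.comp x hgraph
  rw [hcomp.fderiv]
  ext v
  simp [← map_add]

theorem fderiv_comp_inl_eq_neg_of_eventuallyEq_zero (hf : DifferentiableAt 𝕜 f (x, θ x))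
    (hθ : DifferentiableAt 𝕜 θ x) (hzero : (fun x' => f (x', θ x')) =ᶠ[𝓝 x] 0) :
    fderiv 𝕜 f (x, θ x) ∘L inl 𝕜 E F = -(fderiv 𝕜 f (x, θ x) ∘L inr 𝕜 E F ∘L fderiv 𝕜 θ x) := by
  have h := fderiv_comp_graph hf hθ
  rw [hzero.fderiv_eq, fderiv_zero] at h
  exact eq_neg_of_add_eq_zero_left h.symm

end PartialDerivatives

theorem vecMul_toMatrix' {𝕜 ι κ : Type*} [NontriviallyNormedField 𝕜] [Fintype ι] [DecidableEq ι]
    [Fintype κ] [DecidableEq κ] (ℓ : (ι → 𝕜) →L[𝕜] 𝕜) (M : (κ → 𝕜) →L[𝕜] (ι → 𝕜)) :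
    (fun i => ℓ (Pi.single i 1)) ᵥ* LinearMap.toMatrix' (M : (κ → 𝕜) →ₗ[𝕜] (ι → 𝕜)) =
      fun k => ℓ (M (Pi.single k 1)) := by
  ext k
  have hℓ := ℓ.toLinearMap.pi_apply_eq_sum_univ (M (Pi.single k 1))
  simp only [coe_coe] at hℓ
  rw [hℓ]
  simp only [vecMul, dotProduct, LinearMap.toMatrix'_apply, coe_coe, smul_eq_mul, mul_comm]
  congr! with i - j
  simp [Pi.single_apply, eq_comm]

section ADKF

variable {m n : ℕ} {L : (Fin m → ℝ) × (Fin n → ℝ) → ℝ}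

noncomputable def gradθVec (L : (Fin m → ℝ) × (Fin n → ℝ) → ℝ) (p : (Fin m → ℝ) × (Fin n → ℝ)) :
    Fin n → ℝ :=
  fun i => fderiv ℝ L p (0, Pi.single i 1)

theorem gradθ_eq_gradθVec (hL : Differentiable ℝ L) (ψ : Fin m → ℝ) (θ : Fin n → ℝ) :
    gradθ L ψ θ = gradθVec L (ψ, θ) :=
  funext fun i => by rw [gradθ, fderiv_comp_prodMk_right (hL _)]; rfl

theorem ContDiff.gradθVec (hL : ContDiff ℝ 2 L) : ContDiff ℝ 1 (gradθVec L) :=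
  contDiff_pi.2 fun _ => (hL.fderiv_right (by norm_num)).clm_apply contDiff_const

theorem hessθθ_eq_toMatrix' (hL : ContDiff ℝ 2 L) (ψ : Fin m → ℝ) (θ : Fin n → ℝ) :
    hessθθ L ψ θ = LinearMap.toMatrix'
      (fderiv ℝ (gradθVec L) (ψ, θ) ∘L inr ℝ _ _ : (Fin n → ℝ) →ₗ[ℝ] (Fin n → ℝ)) := by
  have hG := hL.gradθVec.differentiable one_ne_zero
  ext i k
  simp only [hessθθ, gradθ_eq_gradθVec (hL.differentiable two_ne_zero), LinearMap.toMatrix'_apply]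
  rw [fderiv_comp_prodMk_right (f := fun p => gradθVec L p i) (differentiableAt_pi.1 (hG _) i),
    fderiv_apply (hG _) i]
  rfl

theorem hessθψ_eq_toMatrix' (hL : ContDiff ℝ 2 L) (ψ : Fin m → ℝ) (θ : Fin n → ℝ) :
    hessθψ L ψ θ = LinearMap.toMatrix'
      (fderiv ℝ (gradθVec L) (ψ, θ) ∘L inl ℝ _ _ : (Fin m → ℝ) →ₗ[ℝ] (Fin n → ℝ)) := by
  have hG := hL.gradθVec.differentiable one_ne_zero
  ext i k
  simp only [hessθψ, gradθ_eq_gradθVec (hL.differentiable two_ne_zero), LinearMap.toMatrix'_apply]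
  rw [fderiv_comp_prodMk_left (f := fun p => gradθVec L p i) (differentiableAt_pi.1 (hG _) i),
    fderiv_apply (hG _) i]
  rfl

end ADKF

theorem stmt_3_general {m n : ℕ} (LT LV : (Fin m → ℝ) × (Fin n → ℝ) → ℝ)
    (hLT : ContDiff ℝ 2 LT) (hLV : ContDiff ℝ 1 LV)
    (U : Set (Fin m → ℝ)) (hU : IsOpen U) (ψ : Fin m → ℝ) (hψ : ψ ∈ U)
    (θs : (Fin m → ℝ) → (Fin n → ℝ)) (hθs : ContDiffOn ℝ 1 θs U)
    (hstat : ∀ ψ' ∈ U, ∀ i, gradθ LT ψ' (θs ψ') i = 0)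
    (g₁ : Fin m → ℝ)
    (hg₁ : ∀ j, g₁ j = fderiv ℝ (fun ψ' => LV (ψ', θs ψ)) ψ (Pi.single j 1))
    (g₂ : Fin n → ℝ)
    (hg₂ : ∀ i, g₂ i = fderiv ℝ (fun θ => LV (ψ, θ)) (θs ψ) (Pi.single i 1))
    (v : Fin n → ℝ) (hv : v ᵥ* hessθθ LT ψ (θs ψ) = g₂) :
    ∀ j, fderiv ℝ (fun ψ' => LV (ψ', θs ψ')) ψ (Pi.single j 1)
        = g₁ j - (v ᵥ* hessθψ LT ψ (θs ψ)) j := by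
  set θ₀ := θs ψ
  have hθ : DifferentiableAt ℝ θs ψ :=
    (hθs.contDiffAt (hU.mem_nhds hψ)).differentiableAt one_ne_zero
  have hLV₀ : DifferentiableAt ℝ LV (ψ, θ₀) := hLV.differentiable one_ne_zero _
  set J := LinearMap.toMatrix' (fderiv ℝ θs ψ : (Fin m → ℝ) →ₗ[ℝ] (Fin n → ℝ))
  have htotal :
      (fun j => fderiv ℝ (fun ψ' => LV (ψ', θs ψ')) ψ (Pi.single j 1)) = g₁ + g₂ ᵥ* J := by
    have hg₁' : g₁ = fun j => (fderiv ℝ LV (ψ, θ₀) ∘L inl ℝ _ _) (Pi.single j 1) :=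
      funext fun j => by rw [hg₁, fderiv_comp_prodMk_left hLV₀]
    have hg₂' : g₂ = fun i => (fderiv ℝ LV (ψ, θ₀) ∘L inr ℝ _ _) (Pi.single i 1) :=
      funext fun i => by rw [hg₂, fderiv_comp_prodMk_right hLV₀]
    rw [fderiv_comp_graph hLV₀ hθ, hg₁', hg₂', vecMul_toMatrix']
    rfl
  have hstatVec : (fun ψ' => gradθVec LT (ψ', θs ψ')) =ᶠ[𝓝 ψ] 0 := by
    filter_upwards [hU.mem_nhds hψ] with ψ' hψ'
    rw [← gradθ_eq_gradθVec (hLT.differentiable two_ne_zero)]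
    exact funext (hstat ψ' hψ')
  have hP : hessθψ LT ψ θ₀ = -(hessθθ LT ψ θ₀ * J) := by
    rw [hessθψ_eq_toMatrix' hLT, hessθθ_eq_toMatrix' hLT,
      fderiv_comp_inl_eq_neg_of_eventuallyEq_zero
        (hLT.gradθVec.differentiable one_ne_zero _) hθ hstatVec,
      toLinearMap_neg, map_neg, ← comp_assoc, toLinearMap_comp, LinearMap.toMatrix'_comp]
  intro j
  rw [congrFun htotal j, hP, vecMul_neg, ← vecMul_vecMul, hv]
  simp [sub_eq_add_neg]

/-- Correctness of Algorithm 1 (ADKF-IFT): with `g₁ = ∂L_V/∂ψ`,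
`g₂ = ∂L_V/∂θ`, `P = ∂²L_T/∂θ∂ψᵀ`, `H = ∂²L_T/∂θ∂θᵀ` invertible,
stationarity `∂L_T/∂θ(ψ', θ*(ψ')) = 0` near `ψ`, and `v` solving `v·H = g₂`,
the total derivative of `ψ' ↦ L_V(ψ', θ*(ψ'))` at `ψ` equals `g₁ − v·P`. -/
theorem stmt_3 {m n : ℕ} (LT LV : (Fin m → ℝ) × (Fin n → ℝ) → ℝ)
    (hLT : ContDiff ℝ 2 LT) (hLV : ContDiff ℝ 1 LV)
    (U : Set (Fin m → ℝ)) (hU : IsOpen U) (ψ : Fin m → ℝ) (hψ : ψ ∈ U)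
    (θs : (Fin m → ℝ) → (Fin n → ℝ)) (hθs : ContDiffOn ℝ 1 θs U)
    (hstat : ∀ ψ' ∈ U, ∀ i, gradθ LT ψ' (θs ψ') i = 0)
    (hHess : IsUnit (hessθθ LT ψ (θs ψ)).det)
    (g₁ : Fin m → ℝ)
    (hg₁ : ∀ j, g₁ j = fderiv ℝ (fun ψ' => LV (ψ', θs ψ)) ψ (Pi.single j 1))
    (g₂ : Fin n → ℝ)
    (hg₂ : ∀ i, g₂ i = fderiv ℝ (fun θ => LV (ψ, θ)) (θs ψ) (Pi.single i 1))
    (v : Fin n → ℝ) (hv : v ᵥ* hessθθ LT ψ (θs ψ) = g₂) :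
    ∀ j, fderiv ℝ (fun ψ' => LV (ψ', θs ψ')) ψ (Pi.single j 1)
        = g₁ j - (v ᵥ* hessθψ LT ψ (θs ψ)) j :=
  stmt_3_general LT LV hLT hLV U hU ψ hψ θs hθs hstat g₁ hg₁ g₂ hg₂ v hv
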